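/- Define α(ρ²) = 2D''(ρ²)/√(D(ρ²) − D'(ρ²)²ρ²/D'(0)) and β(ρ²) = (D'(ρ²) − D'(0))/√(D(ρ²) − D'(ρ²)²ρ²/D'(0)). Then lim_{ρ→0⁺} α(ρ²)β(ρ²)ρ² = −(4/3)D''(0) and lim_{ρ→0⁺} (α(ρ²)ρ²)² = −(8/3)D''(0). -/

import Mathlib

/-!
Both limits come from the expansion `D(y) − D'(y)² y / D'(0) = −(3/2) D''(0) y² + o(y²)`,
obtained from the second-order Taylor expansion `D(y) = D'(0) y + D''(0) y² / 2 + o(y²)` and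
`D'(y)² = D'(0)² + 2 D'(0) D''(0) y + o(y)`. Since `D''(0) < 0` the radicand is eventually
positive, and after dividing numerator and radicand by `ρ⁴` the two quantities tend to
`2 D''(0)² / (−(3/2) D''(0))` and `4 D''(0)² / (−(3/2) D''(0))`.
-/

open Filter Topology

section Smoothness

variable {𝕜 : Type*} [NontriviallyNormedField 𝕜] {F : Type*} [NormedAddCommGroup F]
  [NormedSpace 𝕜 F] {f : 𝕜 → F} {x : 𝕜} {n : WithTop ℕ∞}

theorem ContDiffAt.eventually_hasDerivAt_deriv (h : ContDiffAt 𝕜 n f x) (hn : 1 ≤ n) :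
    ∀ᶠ y in 𝓝 x, HasDerivAt f (deriv f y) y :=
  ((h.of_le hn).eventually (by simp)).mono fun _ hy ↦
    (hy.differentiableAt one_ne_zero).hasDerivAt

theorem ContDiffAt.hasDerivAt_deriv_iteratedDeriv_two (h : ContDiffAt 𝕜 n f x) (hn : 2 ≤ n) :
    HasDerivAt (deriv f) (iteratedDeriv 2 f x) x := by
  rw [iteratedDeriv_succ', iteratedDeriv_one]
  exact ((h.derivWithin (m := 1) hn).differentiableAt one_ne_zero).hasDerivAt

theorem ContDiffAt.continuousAt_iteratedDeriv_two (h : ContDiffAt 𝕜 n f x) (hn : 2 ≤ n) :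
    ContinuousAt (iteratedDeriv 2 f) x := by
  rw [iteratedDeriv_succ', iteratedDeriv_one]
  exact ((h.derivWithin (m := 1) hn).derivWithin (m := 0) le_rfl).continuousAt

end Smoothness

theorem HasDerivAt.tendsto_sub_div_nhdsNE_zero {g : ℝ → ℝ} {a : ℝ} (h : HasDerivAt g a 0) :
    Tendsto (fun y ↦ (g y - g 0) / y) (𝓝[≠] 0) (𝓝 a) :=
  h.tendsto_slope.congr fun y ↦ by rw [slope_def_field, sub_zero]

theorem tendsto_sub_sub_mul_div_sq {f f' : ℝ → ℝ} {a : ℝ}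
    (hf : ∀ᶠ y in 𝓝 0, HasDerivAt f (f' y) y) (hf' : HasDerivAt f' a 0) :
    Tendsto (fun y ↦ (f y - f 0 - f' 0 * y) / y ^ 2) (𝓝[≠] 0) (𝓝 (a / 2)) := by
  refine HasDerivAt.lhopital_zero_nhdsNE (f' := fun y ↦ f' y - f' 0) (g' := fun y ↦ 2 * y)
    ?_ ?_ ?_ ?_ ?_ ?_
  · filter_upwards [eventually_nhdsWithin_of_eventually_nhds hf] with y hy
    exact ((hy.sub_const (f 0)).sub ((hasDerivAt_id' y).const_mul (f' 0))).congr_deriv (by ring)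
  · filter_upwards with y
    simpa using hasDerivAt_pow 2 y
  · filter_upwards [self_mem_nhdsWithin] with y (hy : y ≠ 0)
    simpa using hy
  · refine tendsto_nhdsWithin_of_tendsto_nhds ?_
    have hcont : ContinuousAt (fun y ↦ f y - f 0 - f' 0 * y) 0 := by
      have := hf.self_of_nhds.continuousAt
      fun_prop
    simpa using hcont.tendsto
  · refine tendsto_nhdsWithin_of_tendsto_nhds ?_
    simpa using (continuous_pow 2).tendsto (0 : ℝ)
  · refine (hf'.tendsto_sub_div_nhdsNE_zero.div_const 2).congr fun y ↦ ?_
    rw [div_div, mul_comm]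

theorem tendsto_sub_sq_mul_div_div_sq {f f' : ℝ → ℝ} {a : ℝ}
    (hf : ∀ᶠ y in 𝓝 0, HasDerivAt f (f' y) y) (hf' : HasDerivAt f' a 0) (hf0 : f 0 = 0)
    (hf'0 : f' 0 ≠ 0) :
    Tendsto (fun y ↦ (f y - f' y ^ 2 * y / f' 0) / y ^ 2) (𝓝[≠] 0) (𝓝 (-(3 / 2) * a)) := by
  set c := f' 0
  have hsum : Tendsto (fun y ↦ (f' y + c) / c) (𝓝[≠] 0) (𝓝 ((c + c) / c)) :=
    ((hf'.continuousAt.add continuousAt_const).div_const c).tendsto.mono_left nhdsWithin_le_nhds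
  have hlim := (tendsto_sub_sub_mul_div_sq hf hf').sub (hf'.tendsto_sub_div_nhdsNE_zero.mul hsum)
  rw [show a / 2 - a * ((c + c) / c) = -(3 / 2) * a by field_simp; ring] at hlim
  refine hlim.congr' ?_
  filter_upwards [self_mem_nhdsWithin] with y (hy : y ≠ 0)
  rw [hf0]
  field_simp
  ring

theorem eventually_pos_of_tendsto_div_sq {g : ℝ → ℝ} {L : ℝ}
    (hg : Tendsto (fun y ↦ g y / y ^ 2) (𝓝[≠] 0) (𝓝 L)) (hL : 0 < L) :
    ∀ᶠ y in 𝓝[≠] 0, 0 < g y := by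
  filter_upwards [hg.eventually (eventually_gt_nhds hL), self_mem_nhdsWithin]
    with y hgy (hy : y ≠ 0)
  exact (div_pos_iff_of_pos_right (by positivity)).1 hgy

theorem tendsto_sq_nhdsGT_zero_nhdsNE : Tendsto (fun ρ : ℝ ↦ ρ ^ 2) (𝓝[>] 0) (𝓝[≠] 0) := by
  refine tendsto_nhdsWithin_of_tendsto_nhds_of_eventually_within _ ?_ ?_
  · exact ((continuous_pow 2).tendsto' (0 : ℝ) 0 (by simp)).mono_left nhdsWithin_le_nhds
  · filter_upwards [self_mem_nhdsWithin] with ρ (hρ : 0 < ρ)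
    exact (pow_pos hρ 2).ne'

theorem div_sqrt_mul_div_sqrt_mul {a b e y : ℝ} (he : 0 ≤ e) :
    a / √e * (b / √e) * y = a * (b / y) / (e / y ^ 2) := by
  rcases eq_or_ne y 0 with rfl | hy
  · simp
  rw [div_mul_div_comm, Real.mul_self_sqrt he]
  field_simp

theorem sq_div_sqrt_mul {a e y : ℝ} (he : 0 ≤ e) :
    (a / √e * y) ^ 2 = a ^ 2 / (e / y ^ 2) := by
  rw [mul_pow, div_pow, Real.sq_sqrt he]
  field_simp

/-- With `α(y) = 2D''(y)/√(D(y) − D'(y)²y/D'(0))` and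
`β(y) = (D'(y) − D'(0))/√(D(y) − D'(y)²y/D'(0))`, if `D(0)=0`, `D` is C⁴ near 0,
`D'(0) > 0` and `D''(0) < 0`, then `lim_{ρ→0⁺} α(ρ²)β(ρ²)ρ² = −(4/3)D''(0)` and
`lim_{ρ→0⁺} (α(ρ²)ρ²)² = −(8/3)D''(0)`. -/
theorem stmt7 (D : ℝ → ℝ) (hD0 : D 0 = 0)
    (hsmooth : ContDiffAt ℝ 4 D 0)
    (hD'0 : 0 < deriv D 0)
    (hD''0 : iteratedDeriv 2 D 0 < 0) :
    Filter.Tendsto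
      (fun ρ : ℝ =>
        (2 * iteratedDeriv 2 D (ρ ^ 2) /
            Real.sqrt (D (ρ ^ 2) - (deriv D (ρ ^ 2)) ^ 2 * ρ ^ 2 / deriv D 0)) *
        ((deriv D (ρ ^ 2) - deriv D 0) /
            Real.sqrt (D (ρ ^ 2) - (deriv D (ρ ^ 2)) ^ 2 * ρ ^ 2 / deriv D 0)) * ρ ^ 2)
      (nhdsWithin 0 (Set.Ioi 0))
      (nhds (-(4 / 3) * iteratedDeriv 2 D 0)) ∧
    Filter.Tendsto
      (fun ρ : ℝ =>
        ((2 * iteratedDeriv 2 D (ρ ^ 2) /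
            Real.sqrt (D (ρ ^ 2) - (deriv D (ρ ^ 2)) ^ 2 * ρ ^ 2 / deriv D 0)) * ρ ^ 2) ^ 2)
      (nhdsWithin 0 (Set.Ioi 0))
      (nhds (-(8 / 3) * iteratedDeriv 2 D 0)) := by
  set c₂ := iteratedDeriv 2 D 0
  have hD' := hsmooth.hasDerivAt_deriv_iteratedDeriv_two (by norm_num)
  have hE := tendsto_sub_sq_mul_div_div_sq (hsmooth.eventually_hasDerivAt_deriv (by norm_num))
    hD' hD0 hD'0.ne'
  have hlim_pos : 0 < -(3 / 2) * c₂ := by linarith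
  have hsq := tendsto_sq_nhdsGT_zero_nhdsNE
  have hE_pos := hsq.eventually (eventually_pos_of_tendsto_div_sq hE hlim_pos)
  have hD'' : Tendsto (fun ρ : ℝ ↦ iteratedDeriv 2 D (ρ ^ 2)) (𝓝[>] 0) (𝓝 c₂) :=
    (hsmooth.continuousAt_iteratedDeriv_two (by norm_num)).tendsto.comp
      (hsq.mono_right nhdsWithin_le_nhds)
  constructor
  · have h := ((hD''.const_mul 2).mul (hD'.tendsto_sub_div_nhdsNE_zero.comp hsq)).div
      (hE.comp hsq) hlim_pos.ne'
    rw [show 2 * c₂ * c₂ / (-(3 / 2) * c₂) = -(4 / 3) * c₂ by field_simp; ring] at h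
    refine h.congr' ?_
    filter_upwards [hE_pos] with ρ hρ
    exact (div_sqrt_mul_div_sqrt_mul hρ.le).symm
  · have h := ((hD''.const_mul 2).pow 2).div (hE.comp hsq) hlim_pos.ne'
    rw [show (2 * c₂) ^ 2 / (-(3 / 2) * c₂) = -(8 / 3) * c₂ by field_simp; ring] at h
    refine h.congr' ?_
    filter_upwards [hE_pos] with ρ hρ
    exact (sq_div_sqrt_mul hρ.le).symm
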